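/- arXiv:0906.3258 — 2 statements merged into one kernel-verified Lean document; each statement's English description precedes it below -/
import Mathlib

section
/- Let X and P be types and F₁, F₂ : X × X × X × P × P → X, written F_i(x,y,z;α,β). Define the family of maps R_{(α,β)} : (X×X) × (X×X) → (X×X) × (X×X) by R_{(α,β)}((x₁,x₂),(y₁,y₂)) = ( (F₁(y₁,x₁,y₂;α,β), y₂), (x₁, F₂(x₂,x₁,y₂;α,β)) ). Then R satisfies the parametric Yang–Baxter equation R^{(2,3)}_{(β,γ)} ∘ R^{(1,3)}_{(α,γ)} ∘ R^{(1,2)}_{(α,β)} = R^{(1,2)}_{(α,β)} ∘ R^{(1,3)}_{(α,γ)} ∘ R^{(2,3)}_{(β,γ)} on (X×X)³ for all α, β, γ ∈ P if and only if F₁ and F₂ satisfy, for all x₁, x₂, y₁, y₂, z₁, z₂ ∈ X and all α, β, γ ∈ P, the four functional equations: (i) F₁(F₁(z₁,y₁,z₂;β,γ), F₁(y₁,x₁,F₂(y₂,y₁,z₂;β,γ);α,γ), z₂; α,β) = F₁(z₁, F₁(y₁,x₁,y₂;α,β), z₂; α,γ); (ii) F₂(F₂(y₂,y₁,z₂;β,γ),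 F₁(y₁,x₁,F₂(y₂,y₁,z₂;β,γ);α,γ), z₂; α,β) = F₂(y₂, F₁(y₁,x₁,y₂;α,β), z₂; α,γ); (iii) F₁(y₁,x₁,F₂(y₂,y₁,z₂;β,γ);α,γ) = F₁(F₁(y₁,x₁,y₂;α,β), x₁, F₂(y₂,F₁(y₁,x₁,y₂;α,β),z₂;α,γ); β,γ); (iv) F₂(x₂,x₁,F₂(y₂,y₁,z₂;β,γ);α,γ) = F₂(F₂(x₂,x₁,y₂;α,β), x₁, F₂(y₂,F₁(y₁,x₁,y₂;α,β),z₂;α,γ); β,γ). -/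
/-!
Evaluated at `((x₁,x₂),(y₁,y₂),(z₁,z₂))`, both sides of the Yang–Baxter equation are explicit
triples of pairs. Their coordinates `z₂` and `x₁` are carried along unchanged on both sides, and
equality of the four remaining coordinates is exactly equations (i), (iii), (ii) and (iv).
-/

/-- `R` acting on factors (1,2) of `Y³` and as the identity on the third. -/
def act12 {Y : Type*} (R : Y × Y → Y × Y) : Y × Y × Y → Y × Y × Y :=
  fun p => ((R (p.1, p.2.1)).1, (R (p.1, p.2.1)).2, p.2.2)

/-- `R` acting on factors (1,3) of `Y³` and as the identity on the second. -/
def act13 {Y : Type*} (R : Y × Y → Y × Y) : Y × Y × Y → Y × Y × Y :=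
  fun p => ((R (p.1, p.2.2)).1, p.2.1, (R (p.1, p.2.2)).2)

/-- `R` acting on factors (2,3) of `Y³` and as the identity on the first. -/
def act23 {Y : Type*} (R : Y × Y → Y × Y) : Y × Y × Y → Y × Y × Y :=
  fun p => (p.1, (R (p.2.1, p.2.2)).1, (R (p.2.1, p.2.2)).2)

/-- The lift of a two-field quad-graph system to a map on `(X×X) × (X×X)`:
`R_{(α,β)}((x₁,x₂),(y₁,y₂)) = ((F₁(y₁,x₁,y₂;α,β), y₂), (x₁, F₂(x₂,x₁,y₂;α,β)))`. -/
def liftMap {X P : Type*} (F₁ F₂ : X → X → X → P → P → X) (α β : P) :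
    (X × X) × (X × X) → (X × X) × (X × X) :=
  fun uv => ((F₁ uv.2.1 uv.1.1 uv.2.2 α β, uv.2.2), (uv.1.1, F₂ uv.1.2 uv.1.1 uv.2.2 α β))

section Act

variable {Y : Type*} (R : Y × Y → Y × Y) (u v w : Y)

@[simp]
lemma act12_apply : act12 R (u, v, w) = ((R (u, v)).1, (R (u, v)).2, w) := rfl

@[simp]
lemma act13_apply : act13 R (u, v, w) = ((R (u, w)).1, v, (R (u, w)).2) := rfl

@[simp]
lemma act23_apply : act23 R (u, v, w) = (u, (R (v, w)).1, (R (v, w)).2) := rfl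

end Act

section LiftMap

variable {X P : Type*} (F₁ F₂ : X → X → X → P → P → X) (α β γ : P) (x₁ x₂ y₁ y₂ z₁ z₂ : X)

@[simp]
lemma liftMap_apply :
    liftMap F₁ F₂ α β ((x₁, x₂), (y₁, y₂)) =
      ((F₁ y₁ x₁ y₂ α β, y₂), (x₁, F₂ x₂ x₁ y₂ α β)) := rfl

lemma liftMap_yangBaxter_lhs_apply :
    (act23 (liftMap F₁ F₂ β γ) ∘ act13 (liftMap F₁ F₂ α γ) ∘ act12 (liftMap F₁ F₂ α β))
        ((x₁, x₂), (y₁, y₂), (z₁, z₂)) =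
      let a := F₁ y₁ x₁ y₂ α β
      let c := F₂ y₂ a z₂ α γ
      ((F₁ z₁ a z₂ α γ, z₂), (F₁ a x₁ c β γ, c), (x₁, F₂ (F₂ x₂ x₁ y₂ α β) x₁ c β γ)) := by
  simp only [Function.comp_apply, act12_apply, act13_apply, act23_apply, liftMap_apply]

lemma liftMap_yangBaxter_rhs_apply :
    (act12 (liftMap F₁ F₂ α β) ∘ act13 (liftMap F₁ F₂ α γ) ∘ act23 (liftMap F₁ F₂ β γ))
        ((x₁, x₂), (y₁, y₂), (z₁, z₂)) =
      let e := F₂ y₂ y₁ z₂ β γ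
      let f := F₁ y₁ x₁ e α γ
      ((F₁ (F₁ z₁ y₁ z₂ β γ) f z₂ α β, z₂), (f, F₂ e f z₂ α β), (x₁, F₂ x₂ x₁ e α γ)) := by
  simp only [Function.comp_apply, act12_apply, act13_apply, act23_apply, liftMap_apply]

lemma liftMap_yangBaxter_apply_iff :
    (act23 (liftMap F₁ F₂ β γ) ∘ act13 (liftMap F₁ F₂ α γ) ∘ act12 (liftMap F₁ F₂ α β))
        ((x₁, x₂), (y₁, y₂), (z₁, z₂)) =
      (act12 (liftMap F₁ F₂ α β) ∘ act13 (liftMap F₁ F₂ α γ) ∘ act23 (liftMap F₁ F₂ β γ))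
        ((x₁, x₂), (y₁, y₂), (z₁, z₂)) ↔
    F₁ (F₁ z₁ y₁ z₂ β γ) (F₁ y₁ x₁ (F₂ y₂ y₁ z₂ β γ) α γ) z₂ α β =
        F₁ z₁ (F₁ y₁ x₁ y₂ α β) z₂ α γ ∧
      F₂ (F₂ y₂ y₁ z₂ β γ) (F₁ y₁ x₁ (F₂ y₂ y₁ z₂ β γ) α γ) z₂ α β =
        F₂ y₂ (F₁ y₁ x₁ y₂ α β) z₂ α γ ∧
      F₁ y₁ x₁ (F₂ y₂ y₁ z₂ β γ) α γ =
        F₁ (F₁ y₁ x₁ y₂ α β) x₁ (F₂ y₂ (F₁ y₁ x₁ y₂ α β) z₂ α γ) β γ ∧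
      F₂ x₂ x₁ (F₂ y₂ y₁ z₂ β γ) α γ =
        F₂ (F₂ x₂ x₁ y₂ α β) x₁ (F₂ y₂ (F₁ y₁ x₁ y₂ α β) z₂ α γ) β γ := by
  rw [liftMap_yangBaxter_lhs_apply, liftMap_yangBaxter_rhs_apply]
  simp only [Prod.mk.injEq, and_true, true_and]
  constructor
  · rintro ⟨h₁, ⟨h₃, h₂⟩, h₄⟩
    exact ⟨h₁.symm, h₂.symm, h₃.symm, h₄.symm⟩
  · rintro ⟨h₁, h₂, h₃, h₄⟩
    exact ⟨h₁.symm, ⟨h₃.symm, h₂.symm⟩, h₄.symm⟩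

end LiftMap

/-- The lifted map satisfies the parametric Yang–Baxter equation iff `F₁`, `F₂`
satisfy the four functional equations. -/
theorem liftMap_yangBaxter_iff {X P : Type*} (F₁ F₂ : X → X → X → P → P → X) :
    (∀ α β γ : P,
      act23 (liftMap F₁ F₂ β γ) ∘ act13 (liftMap F₁ F₂ α γ) ∘ act12 (liftMap F₁ F₂ α β) =
        act12 (liftMap F₁ F₂ α β) ∘ act13 (liftMap F₁ F₂ α γ) ∘ act23 (liftMap F₁ F₂ β γ)) ↔
    (∀ (x₁ x₂ y₁ y₂ z₁ z₂ : X) (α β γ : P),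
      F₁ (F₁ z₁ y₁ z₂ β γ) (F₁ y₁ x₁ (F₂ y₂ y₁ z₂ β γ) α γ) z₂ α β =
        F₁ z₁ (F₁ y₁ x₁ y₂ α β) z₂ α γ ∧
      F₂ (F₂ y₂ y₁ z₂ β γ) (F₁ y₁ x₁ (F₂ y₂ y₁ z₂ β γ) α γ) z₂ α β =
        F₂ y₂ (F₁ y₁ x₁ y₂ α β) z₂ α γ ∧
      F₁ y₁ x₁ (F₂ y₂ y₁ z₂ β γ) α γ =
        F₁ (F₁ y₁ x₁ y₂ α β) x₁ (F₂ y₂ (F₁ y₁ x₁ y₂ α β) z₂ α γ) β γ ∧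
      F₂ x₂ x₁ (F₂ y₂ y₁ z₂ β γ) α γ =
        F₂ (F₂ x₂ x₁ y₂ α β) x₁ (F₂ y₂ (F₁ y₁ x₁ y₂ α β) z₂ α γ) β γ) := by
  simp only [funext_iff, Prod.forall, liftMap_yangBaxter_apply_iff]
  exact ⟨fun h x₁ x₂ y₁ y₂ z₁ z₂ α β γ => h α β γ x₁ x₂ y₁ y₂ z₁ z₂,
    fun h α β γ x₁ x₂ y₁ y₂ z₁ z₂ => h x₁ x₂ y₁ y₂ z₁ z₂ α β γ⟩
end

section
/- The lifted discrete potential KdV Yang–Baxter map, the family R_{(a,b)}((x₁,x₂),(y₁,y₂)) = ( (y₁ + (a−b)/(x₁−y₂), y₂), (x₁, x₂ + (a−b)/(x₁−y₂)) ) on ℂ² × ℂ², satisfies the parametric Yang–Baxter equation: for all parameters a₁, a₂, a₃ ∈ ℂ and all triples of points in ℂ² such that every denominator encountered in evaluating both compositions R^{(2,3)}_{(a₂,a₃)} ∘ R^{(1,3)}_{(a₁,a₃)} ∘ R^{(1,2)}_{(a₁,a₂)} and R^{(1,2)}_{(a₁,a₂)} ∘ R^{(1,3)}_{(a₁,a₃)}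 ∘ R^{(2,3)}_{(a₂,a₃)} is nonzero, the two compositions give the same value. -/
/-- The lifted discrete potential KdV Yang–Baxter map
`R_{(a,b)}((x₁,x₂),(y₁,y₂)) = ((y₁+(a−b)/(x₁−y₂), y₂), (x₁, x₂+(a−b)/(x₁−y₂)))`. -/
noncomputable def liftKdV (a b : ℂ) : (ℂ × ℂ) × (ℂ × ℂ) → (ℂ × ℂ) × (ℂ × ℂ) :=
  fun uv => ((uv.2.1 + (a - b) / (uv.1.1 - uv.2.2), uv.2.2),
             (uv.1.1, uv.1.2 + (a - b) / (uv.1.1 - uv.2.2)))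

/-! Write `u₁ = (x₁, x₂)`, `u₂ = (y₁, y₂)`, `u₃ = (z₁, z₂)`, `X = x₁ - y₂`, `Y = y₁ - z₂`.
Up to permuting coordinates, both compositions only add to them fractions depending on `X` and
`Y`, and every denominator met is, up to a factor `X` or `Y`, one of `P = XY + (a₁ - a₂)` or
`Q = XY - (a₂ - a₃)`. After clearing these, the two identities needed become the linear relation
`(a₁ - a₂) Q + (a₂ - a₃) P = (a₁ - a₃) XY`. -/

section KdVConsistency

variable {K : Type*} [Field K] (a b c : K) {X Y : K}

theorem kdv_consistency₁ (hX : X ≠ 0) (hY : Y ≠ 0) (hP : Y + (a - b) / X ≠ 0)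
    (hQ : X - (b - c) / Y ≠ 0) :
    (a - b) / X + (b - c) / (X - (a - c) / (Y + (a - b) / X)) = (a - c) / (X - (b - c) / Y) := by
  rw [add_div' _ _ _ hX] at hP ⊢
  rw [sub_div' hY] at hQ ⊢
  have hP' := (div_ne_zero_iff.mp hP).1
  have hQ' := (div_ne_zero_iff.mp hQ).1
  have hf : X - (a - c) / ((Y * X + (a - b)) / X) = X * (X * Y - (b - c)) / (Y * X + (a - b)) := by
    rw [div_div_eq_mul_div, sub_div' hP']; ring
  rw [hf, div_div_eq_mul_div, div_div_eq_mul_div, div_add_div _ _ hX (mul_ne_zero hX hQ'),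
    div_eq_div_iff (mul_ne_zero hX (mul_ne_zero hX hQ')) hQ']
  ring

theorem kdv_consistency₂ (hX : X ≠ 0) (hY : Y ≠ 0) (hP : Y + (a - b) / X ≠ 0)
    (hQ : X - (b - c) / Y ≠ 0) :
    (a - c) / (Y + (a - b) / X) = (b - c) / Y + (a - b) / (Y + (a - c) / (X - (b - c) / Y)) := by
  rw [add_div' _ _ _ hX] at hP ⊢
  rw [sub_div' hY] at hQ ⊢
  have hP' := (div_ne_zero_iff.mp hP).1
  have hQ' := (div_ne_zero_iff.mp hQ).1
  have hk : Y + (a - c) / ((X * Y - (b - c)) / Y) = Y * (Y * X + (a - b)) / (X * Y - (b - c)) := by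
    rw [div_div_eq_mul_div, add_div' _ _ _ hQ']; ring
  rw [hk, div_div_eq_mul_div, div_div_eq_mul_div, div_add_div _ _ hY (mul_ne_zero hY hP'),
    div_eq_div_iff hP' (mul_ne_zero hY (mul_ne_zero hY hP'))]
  ring

end KdVConsistency

theorem liftKdV_yangBaxter_general (a₁ a₂ a₃ : ℂ) (u₁ u₂ u₃ : ℂ × ℂ)
    (p1 p2 q1 q2 : (ℂ × ℂ) × (ℂ × ℂ) × (ℂ × ℂ))
    (hp1 : p1 = act12 (liftKdV a₁ a₂) (u₁, u₂, u₃))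
    (hp2 : p2 = act13 (liftKdV a₁ a₃) p1)
    (hq1 : q1 = act23 (liftKdV a₂ a₃) (u₁, u₂, u₃))
    (hq2 : q2 = act13 (liftKdV a₁ a₃) q1)
    (h1 : u₁.1 - u₂.2 ≠ 0)
    (h2 : p1.1.1 - p1.2.2.2 ≠ 0)
    (h4 : u₂.1 - u₃.2 ≠ 0)
    (h5 : q1.1.1 - q1.2.2.2 ≠ 0) :
    act23 (liftKdV a₂ a₃) p2 = act12 (liftKdV a₁ a₂) q2 := by
  subst hp1 hp2 hq1 hq2
  obtain ⟨x₁, x₂⟩ := u₁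
  obtain ⟨y₁, y₂⟩ := u₂
  obtain ⟨z₁, z₂⟩ := u₃
  simp only [act12, act13, act23, liftKdV, Prod.mk.injEq] at h1 h2 h4 h5 ⊢
  have hP : y₁ - z₂ + (a₁ - a₂) / (x₁ - y₂) ≠ 0 := fun h => h2 (by linear_combination h)
  have hQ : x₁ - y₂ - (a₂ - a₃) / (y₁ - z₂) ≠ 0 := fun h => h5 (by linear_combination h)
  have e₁ := kdv_consistency₁ a₁ a₂ a₃ h1 h4 hP hQ
  have e₂ := kdv_consistency₂ a₁ a₂ a₃ h1 h4 hP hQ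
  exact ⟨⟨by linear_combination e₂, trivial⟩, ⟨by linear_combination e₁, by linear_combination e₂⟩,
    trivial, by linear_combination e₁⟩

/-- The lifted discrete potential KdV map satisfies the parametric Yang–Baxter equation
wherever all denominators encountered in both compositions are nonzero. -/
theorem liftKdV_yangBaxter (a₁ a₂ a₃ : ℂ) (u₁ u₂ u₃ : ℂ × ℂ)
    (p1 p2 q1 q2 : (ℂ × ℂ) × (ℂ × ℂ) × (ℂ × ℂ))
    (hp1 : p1 = act12 (liftKdV a₁ a₂) (u₁, u₂, u₃))
    (hp2 : p2 = act13 (liftKdV a₁ a₃) p1)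
    (hq1 : q1 = act23 (liftKdV a₂ a₃) (u₁, u₂, u₃))
    (hq2 : q2 = act13 (liftKdV a₁ a₃) q1)
    (h1 : u₁.1 - u₂.2 ≠ 0)
    (h2 : p1.1.1 - p1.2.2.2 ≠ 0)
    (h3 : p2.2.1.1 - p2.2.2.2 ≠ 0)
    (h4 : u₂.1 - u₃.2 ≠ 0)
    (h5 : q1.1.1 - q1.2.2.2 ≠ 0)
    (h6 : q2.1.1 - q2.2.1.2 ≠ 0) :
    act23 (liftKdV a₂ a₃) p2 = act12 (liftKdV a₁ a₂) q2 :=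
  liftKdV_yangBaxter_general a₁ a₂ a₃ u₁ u₂ u₃ p1 p2 q1 q2 hp1 hp2 hq1 hq2 h1 h2 h4 h5
end
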